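/- Let U be a finite set with n = |U| ≥ 1, let 𝒮 be a finite collection of subsets of U whose union is U, and let c : 𝒮 → ℝ≥0 be a cost function. Consider the greedy algorithm that, while uncovered elements remain, selects a set S ∈ 𝒮 minimizing c(S)/|S ∩ (uncovered elements)| among sets covering at least one new element, and adds it to the solution. Then the greedy algorithm terminates with a cover V of U, and for every subcollection OPT ⊆ 𝒮 whose union is U, c(V) := Σ_{S ∈ V} c(S) satisfies c(V) ≤ (Σ_{k=1}^{n} 1/k) · c(OPT), where c(OPT) = Σ_{S ∈ OPT} c(S). -/

import Mathlib

open scoped NNReal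

/-- `GreedySteps 𝒮 c R V` means that `V` is a possible output of the greedy
set cover algorithm run with collection `𝒮` and cost function `c`, starting
from the set `R` of currently uncovered elements: while uncovered elements
remain, select a set `S ∈ 𝒮` covering at least one new element and minimizing
the price `c(S)/|S ∩ R|` among all such sets, add it to the solution, and
remove its elements from the uncovered set. -/
inductive GreedySteps {α : Type*} [DecidableEq α]
    (𝒮 : Finset (Finset α)) (c : Finset α → ℝ≥0) :
    Finset α → Finset (Finset α) → Prop
  | nil : GreedySteps 𝒮 c ∅ ∅
  | step {R S : Finset α} {V : Finset (Finset α)}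
      (hS : S ∈ 𝒮) (hnew : (S ∩ R).Nonempty)
      (hmin : ∀ S' ∈ 𝒮, (S' ∩ R).Nonempty →
        (c S : ℝ) / ((S ∩ R).card : ℝ) ≤ (c S' : ℝ) / ((S' ∩ R).card : ℝ))
      (hrest : GreedySteps 𝒮 c (R \ S) V) :
      GreedySteps 𝒮 c R (insert S V)

/-!
When the greedy step covers `s` of the `r` uncovered elements at price `p`, every set of an
optimal cover has price at least `p` on the uncovered elements, so `p * r ≤ c(OPT)` and the step
costs `p * s ≤ (s / r) * c(OPT) ≤ (1/(r-s+1) + ⋯ + 1/r) * c(OPT)`. Summing these telescoping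
bounds over the run gives the `n`-th harmonic number.
-/

open Finset

theorem sub_div_le_sum_Ioc_one_div {m r : ℕ} (hmr : m ≤ r) :
    ((r : ℝ) - m) / r ≤ ∑ k ∈ Ioc m r, (1 : ℝ) / k := by
  have hterm : ∀ k ∈ Ioc m r, (1 : ℝ) / r ≤ 1 / k := fun k hk => by
    rw [mem_Ioc] at hk
    exact one_div_le_one_div_of_le (by exact_mod_cast hk.1.trans_le' m.zero_le)
      (by exact_mod_cast hk.2)
  calc ((r : ℝ) - m) / r = ∑ _k ∈ Ioc m r, (1 : ℝ) / r := by
        rw [sum_const, Nat.card_Ioc, nsmul_eq_mul, Nat.cast_sub hmr, mul_one_div]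
    _ ≤ ∑ k ∈ Ioc m r, (1 : ℝ) / k := sum_le_sum hterm

section SetCover

variable {α : Type*} [DecidableEq α]

theorem card_le_sum_card_inter {R : Finset α} {OPT : Finset (Finset α)}
    (hR : R ⊆ OPT.biUnion id) : R.card ≤ ∑ T ∈ OPT, (T ∩ R).card := by
  have hsub : R ⊆ OPT.biUnion (· ∩ R) := fun x hx => by
    obtain ⟨T, hT, hxT⟩ := mem_biUnion.1 (hR hx)
    exact mem_biUnion.2 ⟨T, hT, mem_inter.2 ⟨hxT, hx⟩⟩
  exact (card_le_card hsub).trans card_biUnion_le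

theorem mul_card_le_sum_cost {c : Finset α → ℝ≥0} {R : Finset α} {OPT : Finset (Finset α)}
    (hR : R ⊆ OPT.biUnion id) {p : ℝ} (hp : 0 ≤ p)
    (hprice : ∀ T ∈ OPT, (T ∩ R).Nonempty → p ≤ (c T : ℝ) / (T ∩ R).card) :
    p * R.card ≤ ∑ T ∈ OPT, (c T : ℝ) := by
  have hterm : ∀ T ∈ OPT, p * (T ∩ R).card ≤ (c T : ℝ) := fun T hT => by
    rcases (T ∩ R).eq_empty_or_nonempty with hempty | hne
    · simp [hempty]
    · exact (le_div_iff₀ (by exact_mod_cast hne.card_pos)).1 (hprice T hT hne)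
  calc p * R.card ≤ p * ∑ T ∈ OPT, ((T ∩ R).card : ℝ) := by
        gcongr; exact_mod_cast card_le_sum_card_inter hR
    _ = ∑ T ∈ OPT, p * (T ∩ R).card := mul_sum _ _ _
    _ ≤ ∑ T ∈ OPT, (c T : ℝ) := sum_le_sum hterm

theorem cost_le_card_div_mul_sum_cost {c : Finset α → ℝ≥0} {R S : Finset α}
    {OPT : Finset (Finset α)} (hR : R ⊆ OPT.biUnion id) (hnew : (S ∩ R).Nonempty)
    (hmin : ∀ T ∈ OPT, (T ∩ R).Nonempty →
      (c S : ℝ) / (S ∩ R).card ≤ (c T : ℝ) / (T ∩ R).card) :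
    (c S : ℝ) ≤ ((S ∩ R).card : ℝ) / R.card * ∑ T ∈ OPT, (c T : ℝ) := by
  have hs : (0 : ℝ) < (S ∩ R).card := by exact_mod_cast hnew.card_pos
  have hr : (0 : ℝ) < R.card := by
    exact_mod_cast hnew.card_pos.trans_le (card_le_card inter_subset_right)
  have hbound := mul_card_le_sum_cost hR (by positivity) hmin
  calc (c S : ℝ) = (S ∩ R).card / R.card * ((c S / (S ∩ R).card) * R.card) := by field_simp
    _ ≤ (S ∩ R).card / R.card * ∑ T ∈ OPT, (c T : ℝ) := by gcongr

namespace GreedySteps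

variable {𝒮 : Finset (Finset α)} {c : Finset α → ℝ≥0} {R : Finset α} {V : Finset (Finset α)}

theorem inter_nonempty (h : GreedySteps 𝒮 c R V) : ∀ T ∈ V, (T ∩ R).Nonempty := by
  induction h with
  | nil => simp
  | step _ hnew _ _ ih =>
    intro T hT
    rcases mem_insert.1 hT with rfl | hT
    · exact hnew
    · exact (ih T hT).mono (inter_subset_inter_left sdiff_subset)

theorem subset_biUnion (h : GreedySteps 𝒮 c R V) : R ⊆ V.biUnion id := by
  induction h with
  | nil => simp
  | @step R S V _ _ _ _ ih =>
    intro x hx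
    by_cases hxS : x ∈ S
    · exact mem_biUnion.2 ⟨S, mem_insert_self _ _, hxS⟩
    · exact biUnion_subset_biUnion_of_subset_left id (subset_insert S V)
        (ih (mem_sdiff.2 ⟨hx, hxS⟩))

theorem exists_of_subset_biUnion (𝒮 : Finset (Finset α)) (c : Finset α → ℝ≥0)
    (R : Finset α) (hR : R ⊆ 𝒮.biUnion id) : ∃ V, GreedySteps 𝒮 c R V := by
  induction R using Finset.strongInduction with
  | H R ih =>
    rcases R.eq_empty_or_nonempty with rfl | ⟨x, hx⟩
    · exact ⟨∅, .nil⟩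
    obtain ⟨S₀, hS₀, hxS₀⟩ := mem_biUnion.1 (hR hx)
    have hcand : (𝒮.filter fun S => (S ∩ R).Nonempty).Nonempty :=
      ⟨S₀, mem_filter.2 ⟨hS₀, x, mem_inter.2 ⟨hxS₀, hx⟩⟩⟩
    obtain ⟨S, hS, hSmin⟩ :=
      exists_min_image _ (fun S => (c S : ℝ) / (S ∩ R).card) hcand
    rw [mem_filter] at hS
    have hshrink : R \ S ⊂ R := by
      obtain ⟨y, hy⟩ := hS.2
      exact (ssubset_iff_of_subset sdiff_subset).2
        ⟨y, (mem_inter.1 hy).2, fun hy' => (mem_sdiff.1 hy').2 (mem_inter.1 hy).1⟩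
    obtain ⟨V, hV⟩ := ih _ hshrink (sdiff_subset.trans hR)
    exact ⟨insert S V, .step hS.1 hS.2 (fun S' hS' hne => hSmin S' (mem_filter.2 ⟨hS', hne⟩)) hV⟩

theorem sum_cost_le (h : GreedySteps 𝒮 c R V) {OPT : Finset (Finset α)} (hOPT : OPT ⊆ 𝒮)
    (hR : R ⊆ OPT.biUnion id) :
    ∑ S ∈ V, (c S : ℝ) ≤ (∑ k ∈ Ioc 0 R.card, (1 : ℝ) / k) * ∑ T ∈ OPT, (c T : ℝ) := by
  induction h with
  | nil => simp
  | @step R S V _ hnew hmin hrest ih =>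
    have hSV : S ∉ V := fun hSV => by
      simpa using hrest.inter_nonempty S hSV
    have hcard : (R \ S).card + (S ∩ R).card = R.card := by
      rw [inter_comm]; exact card_sdiff_add_card_inter R S
    have hstep := cost_le_card_div_mul_sum_cost hR hnew fun T hT => hmin T (hOPT hT)
    have hs : ((S ∩ R).card : ℝ) = R.card - (R \ S).card := by
      rw [← hcard]; push_cast; ring
    rw [sum_insert hSV, ← sum_Ioc_consecutive _ (Nat.zero_le _) (Nat.le.intro hcard), add_mul,
      add_comm]
    gcongr
    · exact ih (sdiff_subset.trans hR)
    · rw [hs] at hstep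
      exact hstep.trans (by gcongr; exact sub_div_le_sum_Ioc_one_div (Nat.le.intro hcard))

end GreedySteps

end SetCover

theorem stmt_2_general {α : Type*} [DecidableEq α]
    (U : Finset α) (n : ℕ) (hn : n = U.card)
    (𝒮 : Finset (Finset α)) (hcover : 𝒮.biUnion id = U)
    (c : Finset α → ℝ≥0) :
    (∃ V, GreedySteps 𝒮 c U V) ∧
      ∀ V, GreedySteps 𝒮 c U V →
        U ⊆ V.biUnion id ∧
        ∀ OPT ⊆ 𝒮, OPT.biUnion id = U →
          (∑ S ∈ V, (c S : ℝ)) ≤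
            (∑ k ∈ Finset.Icc 1 n, (1 : ℝ) / (k : ℝ)) * ∑ S ∈ OPT, (c S : ℝ) := by
  refine ⟨GreedySteps.exists_of_subset_biUnion 𝒮 c U hcover.ge, fun V hV => ?_⟩
  refine ⟨hV.subset_biUnion, fun OPT hOPT hOPTcover => ?_⟩
  have hcost := hV.sum_cost_le hOPT hOPTcover.ge
  rwa [← Finset.Icc_add_one_left_eq_Ioc, zero_add, ← hn] at hcost

/-- The greedy algorithm for minimum set cover terminates with a cover `V` of
`U`, and the cost of any such greedy solution is at most the `n`-th harmonic
number times the cost of any set cover `OPT ⊆ 𝒮` of `U`. -/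
theorem stmt_2 {α : Type*} [DecidableEq α]
    (U : Finset α) (n : ℕ) (hn : n = U.card) (hn1 : 1 ≤ n)
    (𝒮 : Finset (Finset α)) (hcover : 𝒮.biUnion id = U)
    (c : Finset α → ℝ≥0) :
    (∃ V, GreedySteps 𝒮 c U V) ∧
      ∀ V, GreedySteps 𝒮 c U V →
        U ⊆ V.biUnion id ∧
        ∀ OPT ⊆ 𝒮, OPT.biUnion id = U →
          (∑ S ∈ V, (c S : ℝ)) ≤
            (∑ k ∈ Finset.Icc 1 n, (1 : ℝ) / (k : ℝ)) * ∑ S ∈ OPT, (c S : ℝ) :=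
  stmt_2_general U n hn 𝒮 hcover c
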